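/- Let $(X,d,\mu)$ be a metric measure space in which every nonempty open set has positive measure and every bounded set has finite measure, satisfying the $\delta$-annular decay property for some $\delta\in(0,1]$ with constant $K\geq 1$, and let $\alpha\colon X\to[0,\delta]$. Let $x,y\in X$ with $a=d(x,y)>0$ and let $r>a$. If $g\in L^{1}(B(x,r+2a))$ satisfies $|g|\leq\min\{1,\,4(3r)^{\alpha(y)}\}$ almost everywhere on $B(x,r+2a)$, then $\frac{1}{\mu(B(x,r))}\int_{B(x,r)}|g|\,d\mu-\frac{1}{\mu(B(y,r+a))}\int_{B(y,r+a)}|g|\,d\mu\leq 12K\,2^{\delta}\,a^{\alpha(y)}$. -/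

import Mathlib

open MeasureTheory Metric Set Filter

noncomputable def maxFun {X : Type*} [MetricSpace X] [MeasurableSpace X]
    (μ : Measure X) (f : X → ℝ) (x : X) : ℝ :=
  ⨆ r : {r : ℝ // 0 < r}, ⨍ t in ball x r.1, |f t| ∂μ

noncomputable def holderSemi {X : Type*} [MetricSpace X] (α : X → ℝ) (f : X → ℝ) : ℝ :=
  ⨆ p : {p : X × X // p.1 ≠ p.2}, |f p.1.1 - f p.1.2| / dist p.1.1 p.1.2 ^ α p.1.1

noncomputable def holderNorm {X : Type*} [MetricSpace X] (α : X → ℝ) (f : X → ℝ) : ℝ :=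
  (⨆ x, |f x|) + holderSemi α f

def MemVarHolder {X : Type*} [MetricSpace X] (α : X → ℝ) (f : X → ℝ) : Prop :=
  Continuous f ∧ BddAbove (Set.range fun x => |f x|) ∧
    BddAbove (Set.range fun p : {p : X × X // p.1 ≠ p.2} =>
      |f p.1.1 - f p.1.2| / dist p.1.1 p.1.2 ^ α p.1.1)

/-! Since `B(x,r) ⊆ B(y,r+a)` and `0 ≤ |g| ≤ M := min 1 (4(3r)^{α(y)})` on `B(x,r)`, the
difference of the two averages is at most `M · μ(B(y,r+a) \ B(x,r)) / μ(B(y,r+a))`. The set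
`B(y,r+a) \ B(x,r)` lies in the annulus `B(y,r+a) \ B(y,r-a)`, whose relative measure is at most
`K (2a/(r+a))^δ` by annular decay. Finally `(3r)^{α(y)} (a/(r+a))^δ ≤ (3ra/(r+a))^{α(y)} ≤ 3a^{α(y)}`
because `a/(r+a) ≤ 1` and `α(y) ≤ δ ≤ 1`. -/

section Average

variable {α : Type*} [MeasurableSpace α] {μ : Measure α}

theorem setAverage_sub_setAverage_le_mul_measureReal_sdiff_div {f : α → ℝ} {s t : Set α}
    {M : ℝ} (hst : s ⊆ t) (ht : μ t ≠ ⊤) (hf : IntegrableOn f t μ) (hf0 : 0 ≤ f)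
    (hfM : ∀ᵐ z ∂μ.restrict s, f z ≤ M) (hM : 0 ≤ M) :
    ⨍ z in s, f z ∂μ - ⨍ z in t, f z ∂μ ≤ M * (μ.real (t \ s) / μ.real t) := by
  have hs : μ s ≠ ⊤ := measure_ne_top_of_subset hst ht
  have hIst : ∫ z in s, f z ∂μ ≤ ∫ z in t, f z ∂μ :=
    setIntegral_mono_set hf (.of_forall hf0) hst.eventuallyLE
  have hIs : ∫ z in s, f z ∂μ ≤ μ.real s * M := by
    simpa [setIntegral_const] using
      setIntegral_mono_ae_restrict (hf.mono_set hst) (integrableOn_const hs) hfM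
  have hIs0 : 0 ≤ ∫ z in s, f z ∂μ := integral_nonneg hf0
  have hmono : μ.real s ≤ μ.real t := measureReal_mono hst ht
  rw [setAverage_eq, setAverage_eq, smul_eq_mul, smul_eq_mul, inv_mul_eq_div, inv_mul_eq_div]
  rcases measureReal_nonneg.eq_or_lt with hs0 | hs0
  · -- junk value: the average over a null set is `0`
    rw [← hs0, div_zero, zero_sub, neg_le]
    have : 0 ≤ ∫ z in t, f z ∂μ := integral_nonneg hf0
    exact (neg_nonpos.2 (by positivity)).trans (by positivity)
  · have ht0 : 0 < μ.real t := hs0.trans_le hmono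
    calc (∫ z in s, f z ∂μ) / μ.real s - (∫ z in t, f z ∂μ) / μ.real t
        ≤ (∫ z in s, f z ∂μ) / μ.real s - (∫ z in s, f z ∂μ) / μ.real t := by gcongr
      _ = (∫ z in s, f z ∂μ) / μ.real s * ((μ.real t - μ.real s) / μ.real t) := by
        field_simp
      _ ≤ M * (μ.real (t \ s) / μ.real t) := by
        gcongr
        · exact (div_le_iff₀ hs0).2 (by linarith)
        exact le_measureReal_sdiff hs

theorem measureReal_div_le_of_le_ofReal_mul {s t : Set α} {c : ℝ} (hc : 0 ≤ c)
    (ht : μ t ≠ ⊤) (hst : μ s ≤ ENNReal.ofReal c * μ t) : μ.real s / μ.real t ≤ c := by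
  rcases (measureReal_nonneg : 0 ≤ μ.real t).eq_or_lt with ht0 | ht0
  · rw [← ht0, div_zero]; exact hc
  · rw [div_le_iff₀ ht0]
    have := ENNReal.toReal_mono (ENNReal.mul_ne_top ENNReal.ofReal_ne_top ht) hst
    rwa [ENNReal.toReal_mul, ENNReal.toReal_ofReal hc] at this

end Average

def HasAnnularDecay {X : Type*} [MetricSpace X] [MeasurableSpace X] (μ : Measure X)
    (δ K : ℝ) : Prop :=
  ∀ (x : X) (r ε : ℝ), 0 < r → 0 < ε → ε < 1 →
    μ (ball x r \ ball x (r * (1 - ε))) ≤ ENNReal.ofReal (K * ε ^ δ) * μ (ball x r)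

theorem HasAnnularDecay.measure_ball_sdiff_ball_le {X : Type*} [MetricSpace X]
    [MeasurableSpace X] {μ : Measure X} {δ K : ℝ} (h : HasAnnularDecay μ δ K) {x y : X}
    {a r : ℝ} (hxy : dist x y ≤ a) (ha : 0 < a) (hr : a < r) :
    μ (ball y (r + a) \ ball x r) ≤
      ENNReal.ofReal (K * (2 * a / (r + a)) ^ δ) * μ (ball y (r + a)) := by
  have hra : 0 < r + a := by linarith
  have hinner : (r + a) * (1 - 2 * a / (r + a)) = r - a := by field_simp; ring
  calc μ (ball y (r + a) \ ball x r)
      ≤ μ (ball y (r + a) \ ball y ((r + a) * (1 - 2 * a / (r + a)))) := by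
        rw [hinner]
        exact measure_mono
          (sdiff_subset_sdiff_right (ball_subset_ball' (by rw [dist_comm]; linarith)))
    _ ≤ _ := h y (r + a) _ hra (by positivity) ((div_lt_one hra).2 (by linarith))

theorem rpow_mul_two_mul_div_add_rpow_le {a r β δ : ℝ} (ha : 0 < a) (hr : 0 ≤ r) (hβ : 0 ≤ β)
    (hβδ : β ≤ δ) (hδ : δ ≤ 1) :
    (3 * r) ^ β * (2 * a / (r + a)) ^ δ ≤ 3 * 2 ^ δ * a ^ β := by
  have hra : 0 < r + a := by linarith
  have hb : a / (r + a) ≤ 1 := (div_le_one hra).2 (by linarith)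
  have hrb : 3 * r * (a / (r + a)) ≤ 3 * a := by
    rw [← mul_div_assoc, div_le_iff₀ hra]; nlinarith
  calc (3 * r) ^ β * (2 * a / (r + a)) ^ δ
      = 2 ^ δ * ((3 * r) ^ β * (a / (r + a)) ^ δ) := by
        rw [mul_div_assoc, Real.mul_rpow zero_le_two (by positivity)]; ring
    _ ≤ 2 ^ δ * ((3 * r) ^ β * (a / (r + a)) ^ β) := by
        gcongr 2 ^ δ * (_ * ?_)
        exact Real.rpow_le_rpow_of_exponent_ge (by positivity) hb hβδ
    _ = 2 ^ δ * (3 * r * (a / (r + a))) ^ β := by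
        rw [Real.mul_rpow (x := 3 * r) (by positivity) (by positivity)]
    _ ≤ 2 ^ δ * (3 * a) ^ β := by gcongr
    _ = 2 ^ δ * (3 ^ β * a ^ β) := by rw [Real.mul_rpow zero_le_three ha.le]
    _ ≤ 2 ^ δ * (3 * a ^ β) := by
        gcongr
        exact Real.rpow_le_self_of_one_le (by norm_num) (hβδ.trans hδ)
    _ = 3 * 2 ^ δ * a ^ β := by ring

theorem bounded_implies_average_estimate_y_general
    {X : Type*} [MetricSpace X] [MeasurableSpace X] (μ : Measure X)
    (hbdd : ∀ s : Set X, Bornology.IsBounded s → μ s < ⊤)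
    (δ K : ℝ) (hδ : δ ∈ Set.Ioc (0 : ℝ) 1) (hK : 1 ≤ K)
    (hann : ∀ (x : X) (r ε : ℝ), 0 < r → 0 < ε → ε < 1 →
      μ (ball x r \ ball x (r * (1 - ε))) ≤ ENNReal.ofReal (K * ε ^ δ) * μ (ball x r))
    (α : X → ℝ) (hα : ∀ x, α x ∈ Set.Icc (0 : ℝ) δ)
    (x y : X) (ha : 0 < dist x y) (r : ℝ) (hr : dist x y < r)
    (g : X → ℝ) (hg : IntegrableOn g (ball x (r + 2 * dist x y)) μ)
    (hgb : ∀ᵐ z ∂(μ.restrict (ball x (r + 2 * dist x y))),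
      |g z| ≤ min 1 (4 * (3 * r) ^ α y)) :
    (⨍ z in ball x r, |g z| ∂μ) - (⨍ z in ball y (r + dist x y), |g z| ∂μ) ≤
      12 * K * 2 ^ δ * dist x y ^ α y := by
  set a := dist x y
  have hr0 : 0 < r := ha.trans hr
  set M := min 1 (4 * (3 * r) ^ α y)
  have hM : 0 ≤ M := le_min zero_le_one (by positivity)
  have hsub : ball x r ⊆ ball y (r + a) := ball_subset_ball' le_rfl
  have hsub' : ball y (r + a) ⊆ ball x (r + 2 * a) :=
    ball_subset_ball' (by rw [dist_comm]; linarith)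
  have hKε : 0 ≤ K * (2 * a / (r + a)) ^ δ := by
    have : 0 < r + a := by linarith
    have : 0 ≤ K := by linarith
    positivity
  have hratio := measureReal_div_le_of_le_ofReal_mul hKε (hbdd _ isBounded_ball).ne
    (HasAnnularDecay.measure_ball_sdiff_ball_le hann le_rfl ha hr)
  calc (⨍ z in ball x r, |g z| ∂μ) - (⨍ z in ball y (r + a), |g z| ∂μ)
      ≤ M * (K * (2 * a / (r + a)) ^ δ) :=
        (setAverage_sub_setAverage_le_mul_measureReal_sdiff_div hsub
          (hbdd _ isBounded_ball).ne (hg.mono_set hsub').abs (fun _ => abs_nonneg _)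
          (ae_restrict_of_ae_restrict_of_subset (hsub.trans hsub') hgb) hM).trans
          (mul_le_mul_of_nonneg_left hratio hM)
    _ ≤ 4 * (3 * r) ^ α y * (K * (2 * a / (r + a)) ^ δ) := by gcongr; exact min_le_right _ _
    _ = 4 * K * ((3 * r) ^ α y * (2 * a / (r + a)) ^ δ) := by ring
    _ ≤ 4 * K * (3 * 2 ^ δ * a ^ α y) := by
        gcongr 4 * K * ?_
        exact rpow_mul_two_mul_div_add_rpow_le ha hr0.le (hα y).1 (hα y).2 hδ.2
    _ = 12 * K * 2 ^ δ * a ^ α y := by ring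

/-- Step 2.2. Bounded functions on `B(x, r+2a)` satisfy the average
difference estimate `12 K 2^δ a^{α(y)}`. -/
theorem bounded_implies_average_estimate_y
    {X : Type*} [MetricSpace X] [MeasurableSpace X] [BorelSpace X] (μ : Measure X)
    (hopen : ∀ U : Set X, IsOpen U → U.Nonempty → 0 < μ U)
    (hbdd : ∀ s : Set X, Bornology.IsBounded s → μ s < ⊤)
    (δ K : ℝ) (hδ : δ ∈ Set.Ioc (0 : ℝ) 1) (hK : 1 ≤ K)
    (hann : ∀ (x : X) (r ε : ℝ), 0 < r → 0 < ε → ε < 1 →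
      μ (ball x r \ ball x (r * (1 - ε))) ≤ ENNReal.ofReal (K * ε ^ δ) * μ (ball x r))
    (α : X → ℝ) (hα : ∀ x, α x ∈ Set.Icc (0 : ℝ) δ)
    (x y : X) (ha : 0 < dist x y) (r : ℝ) (hr : dist x y < r)
    (g : X → ℝ) (hg : IntegrableOn g (ball x (r + 2 * dist x y)) μ)
    (hgb : ∀ᵐ z ∂(μ.restrict (ball x (r + 2 * dist x y))),
      |g z| ≤ min 1 (4 * (3 * r) ^ α y)) :
    (⨍ z in ball x r, |g z| ∂μ) - (⨍ z in ball y (r + dist x y), |g z| ∂μ) ≤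
      12 * K * 2 ^ δ * dist x y ^ α y :=
  bounded_implies_average_estimate_y_general μ hbdd δ K hδ hK hann α hα x y ha r hr g hg hgb
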